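/- Let C be a commutative monoid and 0 → N_1 → N → N_2 → 0 a short exact sequence of right H(C)-modules. Then 0 → G_*(C, N_1) → G_*(C, N) → G_*(C, N_2) → 0 is a Y-exact sequence of left Γ-modules: it is objectwise exact, and moreover for every partition λ = (λ_1 ≥ ⋯ ≥ λ_k ≥ 1) with λ_1 + ⋯ + λ_k = n, the induced map on Σ(λ)-invariants G_*(C, N)([n])^{Σ(λ)} → G_*(C, N_2)([n])^{Σ(λ)} is surjective, where Σ(λ) = Σ_{λ_1} × ⋯ × Σ_{λ_k} ⊂ Σ_n acts via the automorphisms of [n] in Γ. -/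

import Mathlib

open CategoryTheory Opposite DirectSum

set_option maxHeartbeats 1000000
set_option synthInstance.maxHeartbeats 1000000

abbrev HCat (C : Type) [CommMonoid C] := C

instance (C : Type) [CommMonoid C] : Category (HCat C) where
  Hom a b := {c : C // c * a = b}
  id a := ⟨1, one_mul a⟩
  comp f g := ⟨g.1 * f.1, by rw [mul_assoc, f.2, g.2]⟩
  id_comp f := Subtype.ext (mul_one f.1)
  comp_id f := Subtype.ext (one_mul f.1)
  assoc f g h := Subtype.ext (mul_assoc h.1 g.1 f.1).symm

abbrev RightHMod (C : Type) [CommMonoid C] := (HCat C)ᵒᵖ ⥤ AddCommGrpCat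

variable (C : Type) [CommMonoid C] [DecidableEq C]

/-- `G_*(C,N)([n]) = ⊕_{(a_1,...,a_n) ∈ C^n} N(a_1⋯a_n)`. -/
abbrev GstObj (N : RightHMod C) (n : ℕ) :=
  ⨁ v : Fin n → C, N.obj (op ((∏ i, v i : C) : HCat C))

/-- The map `G_*(C,N) → G_*(C,N')` induced by a morphism `φ : N ⟶ N'`. -/
noncomputable def GstMapHom {N N' : RightHMod C} (φ : N ⟶ N') (n : ℕ) :
    GstObj C N n →+ GstObj C N' n :=
  DirectSum.toAddMonoid (fun v =>
    (DirectSum.of (fun w : Fin n → C => N'.obj (op ((∏ i, w i : C) : HCat C))) v).comp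
      (φ.app (op ((∏ i, v i : C) : HCat C))).hom)

/-- The action of a permutation `σ ∈ Σ_n` (an automorphism of `[n]` in `Γ`) on
`G_*(C,N)([n])`: the summand indexed by `(a_1,...,a_n)` is sent identically to the
summand indexed by `(a_{σ⁻¹(1)},...,a_{σ⁻¹(n)})`. -/
noncomputable def permAct (N : RightHMod C) {n : ℕ} (σ : Equiv.Perm (Fin n)) :
    GstObj C N n →+ GstObj C N n :=
  DirectSum.toAddMonoid (fun v =>
    (DirectSum.of (fun w : Fin n → C => N.obj (op ((∏ i, w i : C) : HCat C)))
        (v ∘ σ.symm)).comp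
      (N.map (Quiver.Hom.op
        (⟨1, by
            rw [one_mul]
            exact Equiv.prod_comp σ.symm v⟩ :
          ((∏ i, (v ∘ σ.symm) i : C) : HCat C) ⟶ ((∏ i, v i : C) : HCat C)))).hom)

/-- Membership in the standard Young subgroup `Σ(λ) ⊆ Σ_n` of a partition
`λ = (λ_1 ≥ ⋯ ≥ λ_k)`: a permutation lies in `Σ(λ)` iff it preserves the
consecutive blocks of sizes `λ_1, ..., λ_k`. -/
def inYoung (lam : List ℕ) {n : ℕ} (σ : Equiv.Perm (Fin n)) : Prop :=
  ∀ i : Fin n,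
    (List.range lam.length).countP (fun j => (lam.take (j+1)).sum ≤ (σ i : ℕ)) =
    (List.range lam.length).countP (fun j => (lam.take (j+1)).sum ≤ (i : ℕ))

/-- An element of `G_*(C,N)([n])` invariant under the Young subgroup `Σ(λ)`. -/
def isInvariant (N : RightHMod C) (lam : List ℕ) {n : ℕ} (x : GstObj C N n) : Prop :=
  ∀ σ : Equiv.Perm (Fin n), inYoung lam σ → permAct C N σ x = x

/-!
`G_*(C, -)` takes direct sums of the values `N(a_1⋯a_n)`, so exactness holds summand by summand.
For the invariants, pick for every `a ∈ C` a zero-preserving set-theoretic section `s_a` of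
`β : N(a) → N₂(a)` and apply it componentwise. Since the section depends only on the product
`a_1⋯a_n`, which permutations preserve, and permutations act on summands by identity maps, the lift
commutes with every permutation; so it is invariant whenever the element it lifts is.
-/

namespace DFinsupp

variable {ι : Type*} {β₁ β₂ β₃ : ι → Type*} [∀ i, Zero (β₁ i)] [∀ i, Zero (β₂ i)]
  [∀ i, Zero (β₃ i)]

theorem mem_range_mapRange_iff {f : ∀ i, β₁ i → β₂ i} (hf : ∀ i, f i 0 = 0) {y : Π₀ i, β₂ i} :
    y ∈ Set.range (mapRange f hf) ↔ ∀ i, y i ∈ Set.range (f i) := by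
  classical
  refine ⟨fun ⟨x, hx⟩ i => ⟨x i, by rw [← hx, mapRange_apply]⟩, fun h => ?_⟩
  choose x hx using h
  refine ⟨mk y.support fun i => x i, ext fun i => ?_⟩
  rw [mapRange_apply, mk_apply]
  split_ifs with hi
  · exact hx i
  · rw [hf, notMem_support_iff.1 hi]

theorem mapRange_exact {f : ∀ i, β₁ i → β₂ i} {g : ∀ i, β₂ i → β₃ i} (hf : ∀ i, f i 0 = 0)
    (hg : ∀ i, g i 0 = 0) (h : ∀ i, Function.Exact (f i) (g i)) :
    Function.Exact (mapRange f hf) (mapRange g hg) := fun y => by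
  simp only [mem_range_mapRange_iff, DFinsupp.ext_iff, mapRange_apply, zero_apply]
  exact forall_congr' fun i => h i (y i)

end DFinsupp

theorem Function.Surjective.exists_rightInverse_map_zero {M N : Type*} [Zero M] [Zero N]
    {f : M → N} (hf : Function.Surjective f) (h0 : f 0 = 0) :
    ∃ g : N → M, g 0 = 0 ∧ Function.RightInverse g f := by
  classical
  refine ⟨fun y => if y = 0 then 0 else Function.surjInv hf y, if_pos rfl, fun y => ?_⟩
  dsimp only
  split_ifs with hy
  · rw [h0, hy]
  · exact Function.surjInv_eq hf y

section UnitMorphisms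

-- A morphism labelled `1` only joins equal objects, where it is the identity.
variable {C : Type} [CommMonoid C]

theorem map_unit_self (N : RightHMod C) {a : HCat C} (h : 1 * a = a) (z : N.obj (op a)) :
    N.map (Quiver.Hom.op (⟨1, h⟩ : a ⟶ a)) z = z := by
  change N.map (𝟙 a).op z = z
  simp

theorem map_unit_comm {N N' : RightHMod C} (F : ∀ a : C, N.obj (op a) → N'.obj (op a))
    {a b : HCat C} (h : 1 * a = b) (z : N.obj (op b)) :
    N'.map (Quiver.Hom.op (⟨1, h⟩ : a ⟶ b)) (F b z) =
      F a (N.map (Quiver.Hom.op (⟨1, h⟩ : a ⟶ b)) z) := by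
  obtain rfl : a = b := (one_mul a).symm.trans h
  rw [map_unit_self, map_unit_self]

theorem map_unit_map_unit (N : RightHMod C) {a b c : HCat C} (h₁ : 1 * a = b)
    (h₂ : 1 * b = c) (z : N.obj (op c)) :
    N.map (Quiver.Hom.op (⟨1, h₁⟩ : a ⟶ b)) (N.map (Quiver.Hom.op (⟨1, h₂⟩ : b ⟶ c)) z) =
      N.map (Quiver.Hom.op (⟨1, by rw [← h₂, ← h₁, one_mul, one_mul]⟩ : a ⟶ c)) z := by
  obtain rfl : a = b := (one_mul a).symm.trans h₁
  obtain rfl : a = c := (one_mul a).symm.trans h₂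
  rw [map_unit_self, map_unit_self]

end UnitMorphisms

section Gst

variable {C : Type} [CommMonoid C] [DecidableEq C]

theorem of_apply_of_eq (N : RightHMod C) {n : ℕ} {u w : Fin n → C} (huw : u = w)
    (t : N.obj (op ((∏ i, u i : C) : HCat C))) :
    of (fun v : Fin n → C => N.obj (op ((∏ i, v i : C) : HCat C))) u t w =
      N.map (Quiver.Hom.op (⟨1, by rw [huw, one_mul]⟩ :
        ((∏ i, w i : C) : HCat C) ⟶ ((∏ i, u i : C) : HCat C))) t := by
  subst huw
  rw [of_eq_same, map_unit_self]

theorem GstMapHom_eq_mapRange {N N' : RightHMod C} (φ : N ⟶ N') (n : ℕ) :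
    ⇑(GstMapHom C φ n) =
      DFinsupp.mapRange (fun v : Fin n → C => φ.app (op ((∏ i, v i : C) : HCat C)))
        (fun _ => map_zero _) := by
  have : GstMapHom C φ n = DFinsupp.mapRange.addMonoidHom
      fun v : Fin n → C => (φ.app (op ((∏ i, v i : C) : HCat C))).hom :=
    DirectSum.addHom_ext fun v z => by
      simp only [GstMapHom, toAddMonoid_of, AddMonoidHom.comp_apply]
      exact (DFinsupp.mapRange_single
        (f := fun w : Fin n → C => ⇑(φ.app (op ((∏ i, w i : C) : HCat C))).hom)
        (hf := fun _ => map_zero _)).symm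
  rw [this]
  rfl

theorem permAct_apply (N : RightHMod C) {n : ℕ} (σ : Equiv.Perm (Fin n)) (x : GstObj C N n)
    (w : Fin n → C) :
    permAct C N σ x w =
      N.map (Quiver.Hom.op (⟨1, by rw [one_mul]; exact (Equiv.prod_comp σ w).symm⟩ :
        ((∏ i, w i : C) : HCat C) ⟶ ((∏ i, (w ∘ σ) i : C) : HCat C))) (x (w ∘ σ)) := by
  induction x using DirectSum.induction_on with
  | zero => simp
  | of v z =>
    simp only [permAct, toAddMonoid_of, AddMonoidHom.comp_apply]
    by_cases hv : v = w ∘ σ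
    · subst hv
      rw [of_apply_of_eq N (by ext; simp : (w ∘ σ) ∘ σ.symm = w), map_unit_map_unit, of_eq_same]
    · have hv' : v ∘ σ.symm ≠ w := fun h => hv (by rw [← h]; ext; simp)
      rw [of_eq_of_ne _ _ _ (Ne.symm hv'), of_eq_of_ne _ _ _ (Ne.symm hv), map_zero]
  | add x y hx hy => rw [map_add, DirectSum.add_apply, DirectSum.add_apply, hx, hy, map_add]

theorem permAct_mapRange {N N' : RightHMod C} (F : ∀ a : C, N.obj (op a) → N'.obj (op a))
    (hF : ∀ a, F a 0 = 0) {n : ℕ} (σ : Equiv.Perm (Fin n)) (x : GstObj C N n) :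
    permAct C N' σ (DFinsupp.mapRange (fun v : Fin n → C => F (∏ i, v i)) (fun _ => hF _) x) =
      DFinsupp.mapRange (fun v : Fin n → C => F (∏ i, v i)) (fun _ => hF _)
        (permAct C N σ x) := by
  ext w
  rw [permAct_apply, DFinsupp.mapRange_apply, DFinsupp.mapRange_apply, permAct_apply,
    map_unit_comm]

end Gst

/-- If `0 → N₁ → N → N₂ → 0` is a short exact sequence of right `H(C)`-modules, then
`0 → G_*(C,N₁) → G_*(C,N) → G_*(C,N₂) → 0` is objectwise exact, and it is `Y`-exact:
for every partition `λ = (λ_1 ≥ ⋯ ≥ λ_k ≥ 1)` with `λ_1 + ⋯ + λ_k = n`, the induced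
map on `Σ(λ)`-invariants `G_*(C,N)([n])^{Σ(λ)} → G_*(C,N₂)([n])^{Σ(λ)}` is
surjective. -/
theorem Gst_of_short_exact_is_Y_exact
    {N₁ N N₂ : RightHMod C} (α : N₁ ⟶ N) (β : N ⟶ N₂)
    (hinj : ∀ a : C, Function.Injective (α.app (op (a : HCat C))))
    (hsurj : ∀ a : C, Function.Surjective (β.app (op (a : HCat C))))
    (hexact : ∀ a : C,
      Set.range (α.app (op (a : HCat C))) = (β.app (op (a : HCat C))) ⁻¹' {0}) :
    (∀ n : ℕ,
      Function.Injective (GstMapHom C α n) ∧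
      Function.Surjective (GstMapHom C β n) ∧
      Set.range (GstMapHom C α n) = (GstMapHom C β n) ⁻¹' {0}) ∧
    (∀ (n : ℕ) (lam : List ℕ), lam.Pairwise (· ≥ ·) → (∀ p ∈ lam, 0 < p) →
      lam.sum = n →
      ∀ x : GstObj C N₂ n, isInvariant C N₂ lam x →
        ∃ y : GstObj C N n, isInvariant C N lam y ∧ GstMapHom C β n y = x) := by
  refine ⟨fun n => ⟨?_, ?_, ?_⟩, fun n lam _ _ _ x hx => ?_⟩
  · rw [GstMapHom_eq_mapRange, DFinsupp.mapRange_injective]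
    exact fun v => hinj _
  · rw [GstMapHom_eq_mapRange, DFinsupp.mapRange_surjective]
    exact fun v => hsurj _
  · rw [GstMapHom_eq_mapRange, GstMapHom_eq_mapRange]
    refine Set.ext fun y => (DFinsupp.mapRange_exact _ _ (fun v z => ?_) y).symm
    exact (Set.ext_iff.1 (hexact _) z).symm
  · choose s hs0 hs using fun a : C => (hsurj a).exists_rightInverse_map_zero (map_zero _)
    refine ⟨DFinsupp.mapRange (fun v : Fin n → C => s (∏ i, v i)) (fun _ => hs0 _) x,
      fun σ hσ => ?_, ?_⟩
    · rw [permAct_mapRange, hx σ hσ]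
    · ext w
      rw [GstMapHom_eq_mapRange, DFinsupp.mapRange_apply, DFinsupp.mapRange_apply, hs]
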